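/- arXiv:1012.4644 — 2 statements merged into one kernel-verified Lean document; each statement's English description precedes it below -/
import Mathlib

section
/- For 0 ≤ t ≤ 1 let u_t be an inner function and h_t ∈ (H^∞)^{-1}. If the map t ↦ |u_t h_t| is continuous from [0,1] into L^∞(𝔻), then both t ↦ |u_t| and t ↦ |h_t| are continuous from [0,1] into L^∞(𝔻). -/
open MeasureTheory Filter Topology Set

noncomputable section

/-- The open unit disk in the complex plane. -/
def unitDisc : Set ℂ := Metric.ball (0:ℂ) 1

/-- The point `e^{iθ}` on the unit circle. -/
def expI (θ : ℝ) : ℂ := Complex.exp (θ * Complex.I)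

/-- Membership in `H^∞`: bounded analytic functions on the unit disk. -/
def MemHinf (f : ℂ → ℂ) : Prop :=
  DifferentiableOn ℂ f unitDisc ∧ ∃ M : ℝ, ∀ z ∈ unitDisc, ‖f z‖ ≤ M

/-- Membership in `(H^∞)⁻¹`: invertible elements of `H^∞`, i.e. bounded analytic
functions whose modulus is bounded below away from zero on the disk. -/
def MemHinfInv (h : ℂ → ℂ) : Prop :=
  MemHinf h ∧ ∃ ε > (0:ℝ), ∀ z ∈ unitDisc, ε ≤ ‖h z‖

/-- `f` has radial limit `L` at the boundary point `e^{iθ}`. -/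
def RadialLimit (f : ℂ → ℂ) (θ : ℝ) (L : ℂ) : Prop :=
  Tendsto (fun r : ℝ => f ((r : ℂ) * expI θ)) (nhdsWithin 1 (Set.Iio 1)) (nhds L)

/-- `u` is an inner function: it belongs to `H^∞` and its radial limits have modulus one
at almost every point of the unit circle. -/
def IsInner (u : ℂ → ℂ) : Prop :=
  MemHinf u ∧ ∀ᵐ θ : ℝ, ∃ L : ℂ, ‖L‖ = 1 ∧ RadialLimit u θ L

/-- Membership in `𝔍*`: the set of products `u·h` with `u` inner and `h ∈ (H^∞)⁻¹`
(equality of functions being required on the unit disk). -/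
def MemJstar (f : ℂ → ℂ) : Prop :=
  ∃ u h : ℂ → ℂ, IsInner u ∧ MemHinfInv h ∧ ∀ z ∈ unitDisc, f z = u z * h z

/-- The normalized Blaschke factor with zero `a`.  For `a = 0` the factor is `z`; points `a`
with `‖a‖ ≥ 1` serve as sentinels whose factor is the constant `1` (so that finite Blaschke
products are covered by sequences that are eventually sentinels). -/
def blaschkeFactor (a z : ℂ) : ℂ :=
  if ‖a‖ < 1 then
    (if a = 0 then z else ((starRingEnd ℂ) a / (‖a‖ : ℂ)) * ((a - z) / (1 - (starRingEnd ℂ) a * z)))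
  else 1

/-- `f` is the Blaschke product with unimodular constant `lam` and zeros the terms of `zs`
lying in the open unit disk (terms of `zs` on the unit circle are sentinels contributing a
factor `1`); the zeros satisfy the Blaschke condition. -/
def IsBlaschkeProductWith (f : ℂ → ℂ) (lam : ℂ) (zs : ℕ → ℂ) : Prop :=
  ‖lam‖ = 1 ∧ (∀ n, ‖zs n‖ ≤ 1) ∧ Summable (fun n => 1 - ‖zs n‖) ∧
  ∀ z ∈ unitDisc, HasProd (fun n => blaschkeFactor (zs n) z) (lam⁻¹ * f z)

/-- `f` is a Blaschke product. -/
def IsBlaschkeProduct (f : ℂ → ℂ) : Prop :=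
  ∃ lam zs, IsBlaschkeProductWith f lam zs

/-- `f` is a finite Blaschke product (only finitely many genuine zeros). -/
def IsFiniteBlaschkeProduct (f : ℂ → ℂ) : Prop :=
  ∃ lam zs, IsBlaschkeProductWith f lam zs ∧ ∃ N : ℕ, ∀ n, N ≤ n → ¬ ‖zs n‖ < 1

/-- The pseudohyperbolic distance `ρ(z,w) = |(z-w)/(1- w̄ z)|`. -/
def pseudoDist (z w : ℂ) : ℝ := ‖(z - w) / (1 - (starRingEnd ℂ) w * z)‖

/-- The hyperbolic distance `β(z,w) = log ((1+ρ)/(1-ρ))`. -/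
def hypDist (z w : ℂ) : ℝ :=
  Real.log ((1 + pseudoDist z w) / (1 - pseudoDist z w))

/-- The (normalized) integral mean of `‖f‖` on the circle of radius `r`. -/
def circleAvgNorm (f : ℂ → ℂ) (r : ℝ) : ℝ :=
  (∫ θ in (0:ℝ)..(2*Real.pi), ‖f ((r : ℂ) * expI θ)‖) / (2*Real.pi)

/-- `f` belongs to the Hardy space `H¹` with norm at most `B`. -/
def MemH1With (f : ℂ → ℂ) (B : ℝ) : Prop :=
  DifferentiableOn ℂ f unitDisc ∧ ∀ r ∈ Set.Ico (0:ℝ) 1, circleAvgNorm f r ≤ B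

/-- `μ` is a Carleson measure with constant `C`:
`∫ ‖f‖ dμ ≤ C‖f‖₁` for every `f` in the Hardy space `H¹`. -/
def IsCarlesonWith (μ : Measure ℂ) (C : ℝ) : Prop :=
  ∀ f : ℂ → ℂ, ∀ B : ℝ, MemH1With f B → (∫ z, ‖f z‖ ∂μ) ≤ C * B

/-- `μ` is a Carleson measure. -/
def IsCarleson (μ : Measure ℂ) : Prop := ∃ C : ℝ, IsCarlesonWith μ C

/-- The Carleson norm `‖μ‖_c` of a measure. -/
def carlesonNorm (μ : Measure ℂ) : ℝ := sInf {C | 0 ≤ C ∧ IsCarlesonWith μ C}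

/-- The measure `μ_b = Σ_k (1-|z_k|) δ_{z_k}` associated to a zero sequence. -/
def zeroMeasure (zs : ℕ → ℂ) : Measure ℂ :=
  Measure.sum (fun n => (ENNReal.ofReal (1 - ‖zs n‖)) • Measure.dirac (zs n))

/-- `f` is a Carleson–Newman Blaschke product with zero sequence `zs` (all the terms of `zs`
being genuine zeros, lying in the unit disk). -/
def IsCNBPWith (f : ℂ → ℂ) (zs : ℕ → ℂ) : Prop :=
  (∃ lam, IsBlaschkeProductWith f lam zs) ∧ (∀ n, ‖zs n‖ < 1) ∧
    IsCarleson (zeroMeasure zs)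

/-- `f` is a Carleson–Newman Blaschke product. -/
def IsCNBP (f : ℂ → ℂ) : Prop :=
  ∃ lam zs, IsBlaschkeProductWith f lam zs ∧ IsCarleson (zeroMeasure zs)

/-- Membership in `CN*`: the set of products `b·h` with `b` a Carleson–Newman Blaschke
product and `h ∈ (H^∞)⁻¹`. -/
def MemCNstar (f : ℂ → ℂ) : Prop :=
  ∃ c h : ℂ → ℂ, IsCNBP c ∧ MemHinfInv h ∧ ∀ z ∈ unitDisc, f z = c z * h z

/-- Continuity of a one-parameter family `γ` on `[0,1]` with respect to the supremum
norm of `H^∞` over the unit disk. -/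
def PathSupContinuousOn (γ : ℝ → ℂ → ℂ) : Prop :=
  ∀ t ∈ Set.Icc (0:ℝ) 1, ∀ ε > (0:ℝ), ∃ δ > (0:ℝ), ∀ s ∈ Set.Icc (0:ℝ) 1,
    |s - t| < δ → ∀ z ∈ unitDisc, ‖γ s z - γ t z‖ ≤ ε

/-- `f` and `g` can be joined by a path (continuous in the `H^∞` norm) lying in the
class `P`. -/
def JoinedInClass (P : (ℂ → ℂ) → Prop) (f g : ℂ → ℂ) : Prop :=
  ∃ γ : ℝ → ℂ → ℂ, PathSupContinuousOn γ ∧ (∀ t ∈ Set.Icc (0:ℝ) 1, P (γ t)) ∧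
    (∀ z ∈ unitDisc, γ 0 z = f z) ∧ (∀ z ∈ unitDisc, γ 1 z = g z)

/-- The truncated Cauchy integral at `e^{iθ}` of the complex measure `w·dν`. -/
def truncCauchy (ν : Measure ℂ) (w : ℂ → ℂ) (θ ε : ℝ) : ℂ :=
  ∫ z in {z : ℂ | ε < ‖z - expI θ‖}, w z / (expI θ - z) ∂ν

/-- `F` is (a.e. on the unit circle) the Cauchy transform of the complex measure `w·dν`,
i.e. the a.e. limit of the truncated Cauchy integrals. -/
def IsCauchyTransform (ν : Measure ℂ) (w : ℂ → ℂ) (F : ℝ → ℂ) : Prop :=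
  ∀ᵐ θ : ℝ, Tendsto (fun ε : ℝ => truncCauchy ν w θ ε)
    (nhdsWithin 0 (Set.Ioi 0)) (nhds (F θ))

/-- The point `a + t(b-a)` of the segment from `a` to `b`. -/
def segPoint (a b : ℂ) (t : ℝ) : ℂ := a + (t : ℂ) * (b - a)

/-- The truncated Cauchy integral at `e^{iθ}` of the measure `σ = Σ_k σ_k`, where `σ_k` is
the path measure (`∫ f dσ_k = ∫_{z_k}^{z*_k} f(ζ) dζ`) on the segment from `z k` to `zs k`. -/
def truncSegCauchy (z zs : ℕ → ℂ) (θ ε : ℝ) : ℂ :=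
  ∑' k : ℕ, ∫ t in (0:ℝ)..1,
    Set.indicator {s : ℝ | ε < ‖segPoint (z k) (zs k) s - expI θ‖}
      (fun s => (zs k - z k) / (expI θ - segPoint (z k) (zs k) s)) t

/-- `F` is (a.e. on the unit circle) the Cauchy transform of the sum of the path measures
along the segments from `z k` to `zs k`. -/
def IsSegCauchyTransform (z zs : ℕ → ℂ) (F : ℝ → ℂ) : Prop :=
  ∀ᵐ θ : ℝ, Tendsto (fun ε : ℝ => truncSegCauchy z zs θ ε)
    (nhdsWithin 0 (Set.Ioi 0)) (nhds (F θ))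

/-- The Poisson integral of a boundary function `v` at `z ∈ 𝔻`. -/
def poissonIntegral (v : ℝ → ℝ) (z : ℂ) : ℝ :=
  (∫ θ in (0:ℝ)..(2*Real.pi), ((1 - ‖z‖^2) / ‖expI θ - z‖^2) * v θ) / (2*Real.pi)

/-- `vt` is the harmonic conjugate (boundary) function of `v ∈ L¹(∂𝔻)`, normalized to
vanish at the origin: the harmonic extension of `v` has a harmonic conjugate vanishing at `0`
whose radial limits agree a.e. with `vt`. -/
def IsConjugateFn (v vt : ℝ → ℝ) : Prop :=
  ∃ G : ℂ → ℂ, DifferentiableOn ℂ G unitDisc ∧ (G 0).im = 0 ∧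
    (∀ z ∈ unitDisc, (G z).re = poissonIntegral v z) ∧
    ∀ᵐ θ : ℝ, Tendsto (fun r : ℝ => (G ((r : ℂ) * expI θ)).im)
      (nhdsWithin 1 (Set.Iio 1)) (nhds (vt θ))

/-- `L` is the boundary function of `log |h|`. -/
def HasBoundaryLogMod (h : ℂ → ℂ) (L : ℝ → ℝ) : Prop :=
  ∀ᵐ θ : ℝ, Tendsto (fun r : ℝ => Real.log ‖h ((r : ℂ) * expI θ)‖)
    (nhdsWithin 1 (Set.Iio 1)) (nhds (L θ))

/-- The condition `2 Im C(σ) - (log|h|)~ ∈ L^∞(∂𝔻)`, where `σ` is the sum of the path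
measures along the segments from `z k` to `zs k` and `(log|h|)~` is the harmonic conjugate
of the boundary function of `log|h|`. -/
def SegCauchyMinusConjBounded (z zs : ℕ → ℂ) (h : ℂ → ℂ) : Prop :=
  ∀ F : ℝ → ℂ, IsSegCauchyTransform z zs F →
    ∃ L vt : ℝ → ℝ, HasBoundaryLogMod h L ∧ IsConjugateFn L vt ∧
      ∃ M : ℝ, ∀ᵐ θ : ℝ, |2 * (F θ).im - vt θ| ≤ M

/-- `b` is a floating Blaschke product: there are radii `r n → 1` with
`inf_θ |b(r_n e^{iθ})| → 1`. -/
def IsFloating (b : ℂ → ℂ) : Prop :=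
  IsBlaschkeProduct b ∧ ∃ r : ℕ → ℝ, (∀ n, r n ∈ Set.Ioo (0:ℝ) 1) ∧
    Tendsto r atTop (nhds 1) ∧
    Tendsto (fun n => ⨅ θ : ℝ, ‖b ((r n : ℂ) * expI θ)‖) atTop (nhds 1)

/-- Continuity of `t ↦ |f t|` from `[0,1]` into `L^∞(𝔻)`. -/
def ModPathContinuousOn (f : ℝ → ℂ → ℂ) : Prop :=
  ∀ t ∈ Set.Icc (0:ℝ) 1, ∀ ε > (0:ℝ), ∃ δ > (0:ℝ), ∀ s ∈ Set.Icc (0:ℝ) 1,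
    |s - t| < δ → ∀ z ∈ unitDisc, |‖f s z‖ - ‖f t z‖| ≤ ε

/-- `z/|z|`, interpreted as `-1` when `z = 0`. -/
def unimod (a : ℂ) : ℂ := if a = 0 then -1 else a / (‖a‖ : ℂ)

/-- The cone `{z ∈ 𝔻 : |z - ξ| < α (1-|z|)}` with vertex `ξ` and opening `α`. -/
def ntCone (ξ : ℂ) (α : ℝ) : Set ℂ := {z : ℂ | ‖z‖ < 1 ∧ ‖z - ξ‖ < α * (1 - ‖z‖)}

/-- The truncated cone `Λ_α^r(ξ)`. -/
def truncCone (ξ : ℂ) (α r : ℝ) : Set ℂ := {z ∈ ntCone ξ α | r < ‖z‖}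

/-- `g` has non-tangential limit `L` at `ξ` through the set `S`. -/
def HasNTLimWithin (g : ℂ → ℂ) (S : Set ℂ) (ξ L : ℂ) : Prop :=
  ∀ α : ℝ, 1 < α → Tendsto g (nhdsWithin ξ (S ∩ ntCone ξ α)) (nhds L)

/-- `G ⊆ 𝔻` is non-tangentially dense: for a.e. boundary point it contains truncated
cones of arbitrarily large opening. -/
def NTDense (G : Set ℂ) : Prop :=
  ∀ᵐ θ : ℝ, ∀ α : ℝ, 1 < α → ∃ r ∈ Set.Ico (0:ℝ) 1, truncCone (expI θ) α r ⊆ G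

/-- Arclength (one-dimensional Hausdorff measure) on a subset of the plane. -/
def arcLengthOn (S : Set ℂ) : Measure ℂ :=
  (MeasureTheory.Measure.hausdorffMeasure 1 : Measure ℂ).restrict S

/-- `f` is harmonic (real-valued) on the open set `U`: locally the real part of an
analytic function. -/
def IsRealHarmonicOn (f : ℂ → ℝ) (U : Set ℂ) : Prop :=
  ∀ z ∈ U, ∃ r > (0:ℝ), Metric.ball z r ⊆ U ∧ ∃ g : ℂ → ℂ,
    DifferentiableOn ℂ g (Metric.ball z r) ∧ ∀ w ∈ Metric.ball z r, f w = (g w).re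

/-- `ω` is the harmonic measure of the domain `U` from the point `z`: a probability
measure on `∂U` reproducing at `z` the values of functions harmonic on `U` and continuous
on its closure. -/
def IsHarmonicMeasure (U : Set ℂ) (z : ℂ) (ω : Measure ℂ) : Prop :=
  IsProbabilityMeasure ω ∧ ω (frontier U)ᶜ = 0 ∧
  ∀ H : ℂ → ℝ, ContinuousOn H (closure U) → IsRealHarmonicOn H U →
    H z = ∫ x, H x ∂ω

/-- A rectifiable Jordan loop in the plane: a continuous `1`-periodic parameterization,
injective on a period, absolutely continuous with integrable derivative. -/
structure JordanLoop where
  g : ℝ → ℂ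
  cont : Continuous g
  periodic : Function.Periodic g 1
  inj : Set.InjOn g (Set.Ico (0:ℝ) 1)
  deriv_integrable : IntervalIntegrable (deriv g) MeasureTheory.volume 0 1
  ftc : ∀ s t : ℝ, g t - g s = ∫ r in s..t, deriv g r

/-- `F` is a boundary-value function of `f` (radial limits a.e.). -/
def HasBoundaryValues (f : ℂ → ℂ) (F : ℝ → ℂ) : Prop :=
  ∀ᵐ θ : ℝ, RadialLimit f θ (F θ)

/-- Membership of a boundary function `F` in the Douglas algebra `H^∞[ū]`, the closed
subalgebra of `L^∞(∂𝔻)` generated by `H^∞` and `ū` (equivalently, the essential-uniform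
closure of `⋃_n ū^n H^∞`). -/
def MemDouglasAlg (u : ℂ → ℂ) (F : ℝ → ℂ) : Prop :=
  ∀ ε > (0:ℝ), ∃ (n : ℕ) (f : ℂ → ℂ) (fb ub : ℝ → ℂ),
    MemHinf f ∧ HasBoundaryValues f fb ∧ HasBoundaryValues u ub ∧
    ∀ᵐ θ : ℝ, ‖F θ - ((starRingEnd ℂ) (ub θ))^n * fb θ‖ ≤ ε

/-- Harmonic conjugation for complex-valued boundary functions (componentwise). -/
def IsConjugateFnC (s st : ℝ → ℂ) : Prop :=
  IsConjugateFn (fun θ => (s θ).re) (fun θ => (st θ).re) ∧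
  IsConjugateFn (fun θ => (s θ).im) (fun θ => (st θ).im)

/-- `‖F‖_{BMO} ≤ γ` via the Fefferman–Stein decomposition: `F = r + s̃ + c` with
`‖r‖_∞ + ‖s‖_∞ ≤ γ`. -/
def BMONormLE (F : ℝ → ℂ) (γ : ℝ) : Prop :=
  ∃ (r s st : ℝ → ℂ) (c : ℂ) (Mr Ms : ℝ), IsConjugateFnC s st ∧
    (∀ᵐ θ : ℝ, F θ = r θ + st θ + c) ∧
    (∀ᵐ θ : ℝ, ‖r θ‖ ≤ Mr) ∧ (∀ᵐ θ : ℝ, ‖s θ‖ ≤ Ms) ∧ Mr + Ms ≤ γ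

/-- `α_b(r)`: the infimum of `|b|` on the set of points at hyperbolic distance `> r`
from the zero sequence `zs`. -/
def alphaAt (b : ℂ → ℂ) (zs : ℕ → ℂ) (r : ℝ) : ℝ :=
  sInf {y : ℝ | ∃ z ∈ unitDisc, (∀ k, r < hypDist z (zs k)) ∧ y = ‖b z‖}

/-- `α_b(∞) = lim_{r→∞} α_b(r) = sup_r α_b(r)`. -/
def alphaInfty (b : ℂ → ℂ) (zs : ℕ → ℂ) : ℝ :=
  sSup {y : ℝ | ∃ r : ℝ, 0 < r ∧ y = alphaAt b zs r}

/-!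
On the boundary `|u_s| = |u_t| = 1` almost everywhere, so if `|u_s h_s|` is uniformly close to
`|u_t h_t|` on `𝔻`, the radial boundary values of the bounded analytic functions `h_s / h_t` and
`h_t / h_s` have modulus at most `(1 + η) / (1 - η)` for a small `η`. A maximum principle with
radial boundary values carries this bound into the disc, so `|h_s|` and `|h_t|` are uniformly
close, and then so are `|u_s|` and `|u_t|`, since `|u_t| ≤ 1`.

The maximum principle comes from Cauchy's formula for `ψ ^ n` on circles of radius `r → 1`:
dominated convergence gives `|ψ(w)| ^ n ≤ c ^ n / (1 - |w|)`, and the constant disappears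
on taking `n`-th roots.
-/

lemma circleMap_zero_eq_mul_expI (r θ : ℝ) : circleMap 0 r θ = r * expI θ := circleMap_zero r θ

lemma ofReal_mul_expI_mem_unitDisc {r : ℝ} (hr : |r| < 1) (θ : ℝ) :
    (r : ℂ) * expI θ ∈ unitDisc := by
  rwa [← circleMap_zero_eq_mul_expI, unitDisc, mem_ball_zero_iff, norm_circleMap_zero]

lemma le_of_forall_pow_le_mul_pow {x y K : ℝ} (hy : 0 ≤ y) (h : ∀ n : ℕ, x ^ n ≤ K * y ^ n) :
    x ≤ y := by
  by_contra! hyx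
  rcases hy.eq_or_lt with rfl | hy
  · simpa [hyx.not_ge] using h 1
  obtain ⟨n, hn⟩ := pow_unbounded_of_one_lt K ((one_lt_div hy).2 hyx)
  rw [div_pow, lt_div_iff₀ (pow_pos hy n)] at hn
  exact (h n).not_gt hn

lemma norm_circleAverage_le_circleAverage_norm {E : Type*} [NormedAddCommGroup E]
    [NormedSpace ℝ E] (f : ℂ → E) (c : ℂ) (R : ℝ) :
    ‖Real.circleAverage f c R‖ ≤ Real.circleAverage (‖f ·‖) c R := by
  rw [Real.circleAverage, Real.circleAverage, norm_smul, smul_eq_mul, Real.norm_of_nonneg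
    (inv_nonneg.2 Real.two_pi_pos.le)]
  gcongr
  exact intervalIntegral.norm_integral_le_integral_norm Real.two_pi_pos.le

lemma DiffContOnCl.norm_le_mul_circleAverage_norm {f : ℂ → ℂ} {r : ℝ} {w : ℂ}
    (hf : DiffContOnCl ℂ f (Metric.ball 0 r)) (hw : ‖w‖ < r) :
    ‖f w‖ ≤ r / (r - ‖w‖) * Real.circleAverage (‖f ·‖) 0 r := by
  have hr : 0 < r := (norm_nonneg w).trans_lt hw
  have hsphere : Metric.sphere (0 : ℂ) |r| = Metric.sphere 0 r := by rw [abs_of_pos hr]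
  have hcont : ContinuousOn f (Metric.sphere 0 r) := by
    rw [← frontier_ball 0 hr.ne']
    exact hf.continuousOn.mono frontier_subset_closure
  have hzw : ∀ z ∈ Metric.sphere (0 : ℂ) r, z - w ≠ 0 := by
    intro z hz
    rw [sub_ne_zero]
    rintro rfl
    simp [mem_sphere_zero_iff_norm.1 hz] at hw
  have hf' : DiffContOnCl ℂ f (Metric.ball 0 |r|) := by rwa [abs_of_pos hr]
  rw [← hf'.circleAverage_smul_div (by rwa [abs_of_pos hr, mem_ball_zero_iff]),
    ← smul_eq_mul, ← Real.circleAverage_fun_smul]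
  refine (norm_circleAverage_le_circleAverage_norm _ _ _).trans
    (Real.circleAverage_mono ?_ ?_ fun z hz => ?_)
  · refine ContinuousOn.circleIntegrable' (hsphere ▸ ?_)
    exact (((continuousOn_id.sub continuousOn_const).div (continuousOn_id.sub continuousOn_const)
      hzw).smul hcont).norm
  · exact ContinuousOn.circleIntegrable'
      (hsphere ▸ (continuousOn_const (c := r / (r - ‖w‖))).smul hcont.norm)
  rw [hsphere, mem_sphere_zero_iff_norm] at hz
  have hlow : r - ‖w‖ ≤ ‖z - w‖ := hz ▸ norm_sub_norm_le z w
  rw [sub_zero, norm_smul, norm_div, hz, smul_eq_mul]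
  gcongr

lemma tendsto_circleAverage_nhdsLT_one {E : Type*} [NormedAddCommGroup E] [NormedSpace ℝ E]
    [CompleteSpace E] {g : ℂ → E} {B : ℝ} {a : E} (hg : ContinuousOn g unitDisc)
    (hB : ∀ z ∈ unitDisc, ‖g z‖ ≤ B)
    (hlim : ∀ᵐ θ : ℝ, Tendsto (fun r : ℝ => g (r * expI θ)) (𝓝[<] 1) (𝓝 a)) :
    Tendsto (fun r => Real.circleAverage g 0 r) (𝓝[<] 1) (𝓝 a) := by
  have hdisc : ∀ᶠ r in 𝓝[<] (1 : ℝ), ∀ θ, circleMap 0 r θ ∈ unitDisc := by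
    filter_upwards [Ioo_mem_nhdsLT (show (-1 : ℝ) < 1 by norm_num)] with r hr
    simpa only [circleMap_zero_eq_mul_expI] using ofReal_mul_expI_mem_unitDisc (abs_lt.2 hr)
  rw [← Real.circleAverage_const a 0 1, Real.circleAverage]
  refine tendsto_const_nhds.smul (intervalIntegral.tendsto_integral_filter_of_dominated_convergence
    (fun _ => B) ?_ ?_ intervalIntegrable_const ?_)
  · filter_upwards [hdisc] with r hr
    exact (hg.comp_continuous (continuous_circleMap 0 r) hr).aestronglyMeasurable
  · filter_upwards [hdisc] with r hr
    exact ae_of_all _ fun θ _ => hB _ (hr θ)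
  · filter_upwards [hlim] with θ hθ _
    simpa only [circleMap_zero_eq_mul_expI] using hθ

theorem MemHinf.norm_le_of_radial_limsup_le {ψ : ℂ → ℂ} (hψ : MemHinf ψ) {c : ℝ} (hc : 0 ≤ c)
    (hbd : ∀ᵐ θ : ℝ, ∀ c' > c, ∀ᶠ r : ℝ in 𝓝[<] 1, ‖ψ (r * expI θ)‖ < c') :
    ∀ z ∈ unitDisc, ‖ψ z‖ ≤ c := by
  obtain ⟨hd, B, hB⟩ := hψ
  intro w hw
  have hw1 : ‖w‖ < 1 := mem_ball_zero_iff.1 hw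
  refine le_of_forall_pow_le_mul_pow hc (K := 1 / (1 - ‖w‖)) fun n => ?_
  set g : ℂ → ℝ := fun z => max ‖ψ z‖ c ^ n
  have hg : ContinuousOn g unitDisc := (hd.continuousOn.norm.sup continuousOn_const).pow n
  have hmean : Tendsto (fun r => Real.circleAverage g 0 r) (𝓝[<] 1) (𝓝 (c ^ n)) := by
    refine tendsto_circleAverage_nhdsLT_one (B := max B c ^ n) hg (fun z hz => ?_) ?_
    · show ‖max ‖ψ z‖ c ^ n‖ ≤ max B c ^ n
      rw [Real.norm_of_nonneg (by positivity)]
      gcongr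
      exact hB z hz
    filter_upwards [hbd] with θ hθ
    refine (tendsto_order.2 ⟨fun c' hc' => .of_forall fun r => hc'.trans_le (le_max_right _ _),
      fun c' hc' => ?_⟩).pow n
    filter_upwards [hθ c' hc'] with r hr using max_lt hr hc'
  have hfactor : Tendsto (fun r : ℝ => r / (r - ‖w‖)) (𝓝[<] 1) (𝓝 (1 / (1 - ‖w‖))) :=
    (tendsto_id.div (tendsto_id.sub_const _) (by simpa [sub_eq_zero] using hw1.ne')).mono_left
      nhdsWithin_le_nhds
  refine ge_of_tendsto (hfactor.mul hmean) ?_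
  filter_upwards [Ioo_mem_nhdsLT hw1] with r hr
  have hsphere : Metric.sphere (0 : ℂ) |r| ⊆ unitDisc := fun z hz => by
    rw [unitDisc, mem_ball_zero_iff, mem_sphere_zero_iff_norm.1 hz, abs_lt]
    constructor <;> linarith [hr.1, hr.2, norm_nonneg w]
  calc ‖ψ w‖ ^ n = ‖ψ w ^ n‖ := (norm_pow _ _).symm
    _ ≤ r / (r - ‖w‖) * Real.circleAverage (‖ψ · ^ n‖) 0 r :=
      ((hd.pow n).diffContOnCl_ball
        (Metric.closedBall_subset_ball hr.2)).norm_le_mul_circleAverage_norm hr.1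
    _ ≤ r / (r - ‖w‖) * Real.circleAverage g 0 r := by
      refine mul_le_mul_of_nonneg_left (Real.circleAverage_mono ?_ ?_ fun z _ => ?_)
        (div_nonneg (by linarith [hr.1, norm_nonneg w]) (by linarith [hr.1]))
      · exact ((hd.pow n).continuousOn.norm.mono hsphere).circleIntegrable'
      · exact (hg.mono hsphere).circleIntegrable'
      · rw [norm_pow]
        exact pow_le_pow_left₀ (norm_nonneg _) (le_max_left _ _) n

theorem IsInner.norm_le_one {u : ℂ → ℂ} (hu : IsInner u) : ∀ z ∈ unitDisc, ‖u z‖ ≤ 1 := by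
  refine hu.1.norm_le_of_radial_limsup_le zero_le_one ?_
  filter_upwards [hu.2] with θ ⟨L, hL, hlim⟩ c' hc'
  exact hlim.norm.eventually (gt_mem_nhds (hL ▸ hc'))

theorem MemHinfInv.norm_pos {h : ℂ → ℂ} (hh : MemHinfInv h) {z : ℂ} (hz : z ∈ unitDisc) :
    0 < ‖h z‖ := by
  obtain ⟨-, m, hm, hmle⟩ := hh
  exact hm.trans_le (hmle z hz)

theorem MemHinf.div {f g : ℂ → ℂ} (hf : MemHinf f) (hg : MemHinfInv g) :
    MemHinf fun z => f z / g z := by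
  obtain ⟨hfd, M, hM⟩ := hf
  obtain ⟨⟨hgd, -⟩, m, hm, hmle⟩ := hg
  refine ⟨hfd.div hgd fun z hz => norm_pos_iff.1 (hm.trans_le (hmle z hz)), M / m,
    fun z hz => ?_⟩
  rw [norm_div]
  exact div_le_div₀ ((norm_nonneg _).trans (hM z hz)) (hM z hz) hm (hmle z hz)

theorem norm_le_mul_norm_of_isInner {u₁ u₂ h₁ h₂ : ℂ → ℂ} (hu₁ : IsInner u₁) (hu₂ : IsInner u₂)
    (hh₁ : MemHinf h₁) (hh₂ : MemHinfInv h₂) {η : ℝ} (hη : 0 ≤ η) (hη1 : η < 1)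
    (hle : ∀ z ∈ unitDisc, (‖u₁ z‖ - η) * ‖h₁ z‖ ≤ (‖u₂ z‖ + η) * ‖h₂ z‖) :
    ∀ z ∈ unitDisc, ‖h₁ z‖ ≤ (1 + η) / (1 - η) * ‖h₂ z‖ := by
  have hκ : 0 ≤ (1 + η) / (1 - η) := div_nonneg (by linarith) (by linarith)
  have hratio := (hh₁.div hh₂).norm_le_of_radial_limsup_le hκ ?_
  · intro z hz
    have := hratio z hz
    rwa [norm_div, div_le_iff₀ (hh₂.norm_pos hz)] at this
  filter_upwards [hu₁.2, hu₂.2] with θ ⟨L₁, hL₁, hlim₁⟩ ⟨L₂, hL₂, hlim₂⟩ c' hc'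
  have hbound : Tendsto (fun r : ℝ => (‖u₂ (r * expI θ)‖ + η) / (‖u₁ (r * expI θ)‖ - η))
      (𝓝[<] 1) (𝓝 ((1 + η) / (1 - η))) := by
    have := (hlim₂.norm.add_const η).div (hlim₁.norm.sub_const η) (by rw [hL₁]; linarith)
    rwa [hL₁, hL₂] at this
  filter_upwards [hbound.eventually (gt_mem_nhds hc'),
    hlim₁.norm.eventually (lt_mem_nhds (show η < ‖L₁‖ by rw [hL₁]; exact hη1)),
    Ioo_mem_nhdsLT (show (-1 : ℝ) < 1 by norm_num)] with r hr hpos hr1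
  have hz : (r : ℂ) * expI θ ∈ unitDisc := ofReal_mul_expI_mem_unitDisc (abs_lt.2 hr1) θ
  refine lt_of_le_of_lt ?_ hr
  rw [norm_div, div_le_div_iff₀ (hh₂.norm_pos hz) (by linarith)]
  linarith [hle _ hz]

lemma abs_sub_le_of_le_mul_of_le_mul {b₁ b₂ κ : ℝ} (hκ : 0 < κ) (hb₂ : 0 ≤ b₂)
    (h₁₂ : b₁ ≤ κ * b₂) (h₂₁ : b₂ ≤ κ * b₁) : |b₁ - b₂| ≤ (κ - 1) * b₂ := by
  refine abs_le.2 ⟨?_, by linarith⟩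
  nlinarith [mul_nonneg (sq_nonneg (κ - 1)) hb₂]

theorem abs_norm_sub_le_of_abs_norm_mul_sub_le {u₁ u₂ h₁ h₂ : ℂ → ℂ} (hu₁ : IsInner u₁)
    (hu₂ : IsInner u₂) (hh₁ : MemHinfInv h₁) (hh₂ : MemHinfInv h₂) {η : ℝ} (hη : 0 ≤ η)
    (hη1 : η < 1)
    (hclose : ∀ z ∈ unitDisc, |‖u₁ z‖ * ‖h₁ z‖ - ‖u₂ z‖ * ‖h₂ z‖| ≤ η * ‖h₂ z‖)
    {z : ℂ} (hz : z ∈ unitDisc) :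
    |‖u₁ z‖ - ‖u₂ z‖| ≤ (1 + η) / (1 - η) * (η + (1 + η) / (1 - η) - 1) ∧
      |‖h₁ z‖ - ‖h₂ z‖| ≤ ((1 + η) / (1 - η) - 1) * ‖h₂ z‖ := by
  set κ := (1 + η) / (1 - η)
  have hκ : 1 ≤ κ := (one_le_div (by linarith)).2 (by linarith)
  have hb₁ := hh₁.norm_pos hz
  have hb₂ := hh₂.norm_pos hz
  have h₁₂ : ‖h₁ z‖ ≤ κ * ‖h₂ z‖ := by
    refine norm_le_mul_norm_of_isInner hu₁ hu₂ hh₁.1 hh₂ hη hη1 (fun w hw => ?_) z hz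
    nlinarith [(abs_le.1 (hclose w hw)).2, mul_nonneg hη (norm_nonneg (h₁ w))]
  have h₂₁ : ‖h₂ z‖ ≤ κ * ‖h₁ z‖ := by
    refine norm_le_mul_norm_of_isInner hu₂ hu₁ hh₂.1 hh₁ hη hη1 (fun w hw => ?_) z hz
    nlinarith [(abs_le.1 (hclose w hw)).1, mul_nonneg hη (norm_nonneg (h₁ w))]
  have hh := abs_sub_le_of_le_mul_of_le_mul (by linarith) hb₂.le h₁₂ h₂₁
  refine ⟨le_of_mul_le_mul_right ?_ hb₁, hh⟩
  calc |‖u₁ z‖ - ‖u₂ z‖| * ‖h₁ z‖ = |(‖u₁ z‖ - ‖u₂ z‖) * ‖h₁ z‖| := by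
        rw [abs_mul, abs_norm]
    _ = |(‖u₁ z‖ * ‖h₁ z‖ - ‖u₂ z‖ * ‖h₂ z‖) - ‖u₂ z‖ * (‖h₁ z‖ - ‖h₂ z‖)| := by
        congr 1
        ring
    _ ≤ η * ‖h₂ z‖ + 1 * ((κ - 1) * ‖h₂ z‖) := by
        refine (abs_sub _ _).trans (add_le_add (hclose z hz) ?_)
        rw [abs_mul, abs_norm]
        exact mul_le_mul (hu₂.norm_le_one z hz) hh (abs_nonneg _) zero_le_one
    _ ≤ (η + κ - 1) * (κ * ‖h₁ z‖) := by
        rw [one_mul, ← add_mul, ← add_sub_assoc]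
        gcongr
        linarith
    _ = κ * (η + κ - 1) * ‖h₁ z‖ := by ring

theorem exists_forall_abs_norm_sub_le_of_isInner {u₂ h₂ : ℂ → ℂ} (hu₂ : IsInner u₂)
    (hh₂ : MemHinfInv h₂) {ε : ℝ} (hε : 0 < ε) :
    ∃ η > 0, ∀ {u₁ h₁ : ℂ → ℂ}, IsInner u₁ → MemHinfInv h₁ →
      (∀ z ∈ unitDisc, |‖u₁ z * h₁ z‖ - ‖u₂ z * h₂ z‖| ≤ η) →
      ∀ z ∈ unitDisc, |‖u₁ z‖ - ‖u₂ z‖| ≤ ε ∧ |‖h₁ z‖ - ‖h₂ z‖| ≤ ε := by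
  obtain ⟨M, hM⟩ := hh₂.1.2
  obtain ⟨m, hm, hmle⟩ := hh₂.2
  have hκ : Tendsto (fun η : ℝ => (1 + η) / (1 - η)) (𝓝 0) (𝓝 1) := by
    have : ContinuousAt (fun η : ℝ => (1 + η) / (1 - η)) 0 := by fun_prop (disch := norm_num)
    simpa using this.tendsto
  have hu : Tendsto (fun η : ℝ => (1 + η) / (1 - η) * (η + (1 + η) / (1 - η) - 1)) (𝓝 0)
      (𝓝 0) := by
    simpa using hκ.mul ((tendsto_id.add hκ).sub_const 1)
  have hh : Tendsto (fun η : ℝ => ((1 + η) / (1 - η) - 1) * M) (𝓝 0) (𝓝 0) := by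
    simpa using (hκ.sub_const 1).mul_const M
  have hsmall : ∀ᶠ η in 𝓝 0, η < 1 ∧
      (1 + η) / (1 - η) * (η + (1 + η) / (1 - η) - 1) < ε ∧ ((1 + η) / (1 - η) - 1) * M < ε :=
    (gt_mem_nhds one_pos).and
      ((hu.eventually (gt_mem_nhds hε)).and (hh.eventually (gt_mem_nhds hε)))
  obtain ⟨η, ⟨hη1, hηu, hηh⟩, hη : 0 < η⟩ :=
    ((hsmall.filter_mono nhdsWithin_le_nhds).and (self_mem_nhdsWithin (s := Ioi 0))).exists
  refine ⟨η * m, mul_pos hη hm, fun {u₁ h₁} hu₁ hh₁ hclose z hz => ?_⟩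
  have hclose' : ∀ w ∈ unitDisc, |‖u₁ w‖ * ‖h₁ w‖ - ‖u₂ w‖ * ‖h₂ w‖| ≤ η * ‖h₂ w‖ :=
    fun w hw => by
      simpa only [norm_mul] using (hclose w hw).trans (by gcongr; exact hmle w hw)
  obtain ⟨hus, hhs⟩ :=
    abs_norm_sub_le_of_abs_norm_mul_sub_le hu₁ hu₂ hh₁ hh₂ hη.le hη1 hclose' hz
  have hκ1 : 0 ≤ (1 + η) / (1 - η) - 1 := by
    rw [sub_nonneg, one_le_div (by linarith)]
    linarith
  exact ⟨hus.trans hηu.le, hhs.trans ((mul_le_mul_of_nonneg_left (hM z hz) hκ1).trans hηh.le)⟩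

/-- Lemma: if `|u_t h_t|` varies continuously in `L^∞(𝔻)`, so do
`|u_t|` and `|h_t|`. -/
theorem statement_3 (u h : ℝ → ℂ → ℂ)
    (hu : ∀ t ∈ Set.Icc (0:ℝ) 1, IsInner (u t))
    (hh : ∀ t ∈ Set.Icc (0:ℝ) 1, MemHinfInv (h t))
    (hc : ModPathContinuousOn (fun t w => u t w * h t w)) :
    ModPathContinuousOn u ∧ ModPathContinuousOn h := by
  suffices H : ∀ t ∈ Icc (0 : ℝ) 1, ∀ ε > 0, ∃ δ > 0, ∀ s ∈ Icc (0 : ℝ) 1, |s - t| < δ →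
      ∀ z ∈ unitDisc, |‖u s z‖ - ‖u t z‖| ≤ ε ∧ |‖h s z‖ - ‖h t z‖| ≤ ε by
    refine ⟨fun t ht ε hε => ?_, fun t ht ε hε => ?_⟩ <;>
    obtain ⟨δ, hδ, hst⟩ := H t ht ε hε
    exacts [⟨δ, hδ, fun s hs hs' z hz => (hst s hs hs' z hz).1⟩,
      ⟨δ, hδ, fun s hs hs' z hz => (hst s hs hs' z hz).2⟩]
  intro t ht ε hε
  obtain ⟨η, hη, hstable⟩ := exists_forall_abs_norm_sub_le_of_isInner (hu t ht) (hh t ht) hε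
  obtain ⟨δ, hδ, hclose⟩ := hc t ht η hη
  exact ⟨δ, hδ, fun s hs hst => hstable (hu s hs) (hh s hs) (hclose s hs hst)⟩
end
end

section
/- Every Blaschke product b can be factorized as b = b₁b₂, where b₁ and b₂ are floating Blaschke products. -/
open MeasureTheory Filter Topology Set

noncomputable section

/-!
Write `φ_a` for the normalized Blaschke factor with zero `a`. Since
`|φ_a(z) - 1| ≤ 2(1-|a|)/(1-|z|)` and `|φ_a(z)| = |φ_z(a)|`, the defect `1 - |φ_a(z)|` is at most
both `2(1-|a|)/(1-|z|)` and `2(1-|z|)/(1-|a|)`. On a circle `|z| = r` the finitely many zeros with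
`|a| < q` thus contribute `O(1-r)` to `Σ (1 - |φ_a(z)|)`, and the zeros with `|a| ≥ q'` at most
`2/(1-r) · Σ_{|a| ≥ q'} (1-|a|)`. Choosing alternately `r` and then `q'` close to `1` gives
`0 = c₀ < ρ₀ < c₁ < ρ₁ < ⋯ → 1` such that the zeros outside the annulus `c_k ≤ |a| < c_{k+1}`
contribute at most `1/(k+1)` on `|z| = ρ_k`. As `|B| ≥ 1 - Σ (1 - |φ_a|)`, a Blaschke product whose
zeros avoid infinitely many of these annuli is floating; so put the zeros of the even-indexed
annuli into `b₁` and all the others into `b₂`.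
-/

open ComplexConjugate

section BlaschkeFactor

variable {a z : ℂ}

lemma blaschkeFactor_one (z : ℂ) : blaschkeFactor 1 z = 1 := by simp [blaschkeFactor]

lemma norm_one_sub_conj_mul_sq_sub_norm_sub_sq (a z : ℂ) :
    ‖1 - conj a * z‖ ^ 2 - ‖a - z‖ ^ 2 = (1 - ‖a‖ ^ 2) * (1 - ‖z‖ ^ 2) := by
  simp only [Complex.sq_norm, Complex.normSq_apply, Complex.sub_re, Complex.sub_im,
    Complex.mul_re, Complex.mul_im, Complex.one_re, Complex.one_im, Complex.conj_re,
    Complex.conj_im]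
  ring

lemma norm_blaschkeFactor (ha : ‖a‖ < 1) :
    ‖blaschkeFactor a z‖ = ‖a - z‖ / ‖1 - conj a * z‖ := by
  rcases eq_or_ne a 0 with rfl | ha0
  · simp [blaschkeFactor]
  · simp [blaschkeFactor, ha, ha0]

lemma norm_blaschkeFactor_comm (ha : ‖a‖ < 1) (hz : ‖z‖ < 1) :
    ‖blaschkeFactor a z‖ = ‖blaschkeFactor z a‖ := by
  rw [norm_blaschkeFactor ha, norm_blaschkeFactor hz, norm_sub_rev a z,
    ← Complex.norm_conj (1 - conj a * z)]
  simp [mul_comm]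

lemma norm_blaschkeFactor_le_one (hz : ‖z‖ < 1) : ‖blaschkeFactor a z‖ ≤ 1 := by
  by_cases ha : ‖a‖ < 1
  · rw [norm_blaschkeFactor ha]
    refine div_le_one_of_le₀ ?_ (norm_nonneg _)
    have hsq := norm_one_sub_conj_mul_sq_sub_norm_sub_sq a z
    have : 0 ≤ (1 - ‖a‖ ^ 2) * (1 - ‖z‖ ^ 2) := by
      have := norm_nonneg a; have := norm_nonneg z
      exact mul_nonneg (by nlinarith) (by nlinarith)
    exact (pow_le_pow_iff_left₀ (norm_nonneg _) (norm_nonneg _) two_ne_zero).1 (by linarith)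
  · simp [blaschkeFactor, ha]

lemma blaschkeFactor_sub_one (ha : ‖a‖ < 1) (ha0 : a ≠ 0) (hz : ‖z‖ < 1) :
    blaschkeFactor a z - 1 =
      ((‖a‖ : ℂ) - 1) * (‖a‖ + conj a * z) / (‖a‖ * (1 - conj a * z)) := by
  have hden : 1 - conj a * z ≠ 0 := by
    intro h
    have := congrArg norm (sub_eq_zero.1 h)
    rw [norm_one, norm_mul, Complex.norm_conj] at this
    nlinarith [norm_nonneg a, norm_nonneg z]
  have hna : (‖a‖ : ℂ) ≠ 0 := by simpa using ha0
  rw [blaschkeFactor, if_pos ha, if_neg ha0, eq_div_iff (mul_ne_zero hna hden)]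
  field_simp
  linear_combination Complex.conj_mul' a

lemma norm_blaschkeFactor_sub_one_le (ha : ‖a‖ ≤ 1) (hz : ‖z‖ < 1) :
    ‖blaschkeFactor a z - 1‖ ≤ 2 * (1 - ‖a‖) / (1 - ‖z‖) := by
  have hz' : 0 < 1 - ‖z‖ := sub_pos.2 hz
  rcases ha.lt_or_eq with ha | ha
  · rcases eq_or_ne a 0 with rfl | ha0
    · calc ‖blaschkeFactor 0 z - 1‖ = ‖z - 1‖ := by simp [blaschkeFactor]
        _ ≤ ‖z‖ + 1 := by simpa using norm_sub_le z 1
        _ ≤ 2 * (1 - ‖(0 : ℂ)‖) / (1 - ‖z‖) := by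
          rw [norm_zero, le_div_iff₀ hz']; nlinarith [norm_nonneg z]
    · have hna : 0 < ‖a‖ := norm_pos_iff.2 ha0
      have hnum : ‖(‖a‖ : ℂ) + conj a * z‖ ≤ ‖a‖ * (1 + ‖z‖) := by
        simpa [norm_mul, mul_add] using norm_add_le (‖a‖ : ℂ) (conj a * z)
      have hden : 1 - ‖z‖ ≤ ‖1 - conj a * z‖ := by
        have := norm_sub_norm_le (1 : ℂ) (conj a * z)
        rw [norm_one, norm_mul, Complex.norm_conj] at this
        nlinarith [norm_nonneg z]
      have h1a : ‖(‖a‖ : ℂ) - 1‖ = 1 - ‖a‖ := by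
        rw [← Complex.ofReal_one, ← Complex.ofReal_sub, Complex.norm_real, Real.norm_eq_abs,
          abs_of_nonpos (by linarith), neg_sub]
      rw [blaschkeFactor_sub_one ha ha0 hz, norm_div, norm_mul, norm_mul, h1a,
        Complex.norm_real, Real.norm_of_nonneg hna.le]
      calc (1 - ‖a‖) * ‖(‖a‖ : ℂ) + conj a * z‖ / (‖a‖ * ‖1 - conj a * z‖)
          ≤ (1 - ‖a‖) * (‖a‖ * (1 + ‖z‖)) / (‖a‖ * (1 - ‖z‖)) := by
            gcongr
        _ = (1 - ‖a‖) * (1 + ‖z‖) / (1 - ‖z‖) := by field_simp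
        _ ≤ 2 * (1 - ‖a‖) / (1 - ‖z‖) := by gcongr ?_ / _; nlinarith
  · simp [blaschkeFactor, ha]

lemma one_sub_norm_blaschkeFactor_le (ha : ‖a‖ ≤ 1) (hz : ‖z‖ < 1) :
    1 - ‖blaschkeFactor a z‖ ≤ 2 * (1 - ‖a‖) / (1 - ‖z‖) := by
  calc 1 - ‖blaschkeFactor a z‖ ≤ ‖1 - blaschkeFactor a z‖ := by
        simpa using norm_sub_norm_le 1 (blaschkeFactor a z)
    _ ≤ 2 * (1 - ‖a‖) / (1 - ‖z‖) := by
        rw [norm_sub_rev]; exact norm_blaschkeFactor_sub_one_le ha hz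

lemma one_sub_norm_blaschkeFactor_le_swap (ha : ‖a‖ < 1) (hz : ‖z‖ < 1) :
    1 - ‖blaschkeFactor a z‖ ≤ 2 * (1 - ‖z‖) / (1 - ‖a‖) := by
  rw [norm_blaschkeFactor_comm ha hz]
  exact one_sub_norm_blaschkeFactor_le hz.le ha

end BlaschkeFactor

lemma Finset.one_sub_sum_one_sub_le_prod {ι : Type*} (s : Finset ι) {f : ι → ℝ}
    (h0 : ∀ i ∈ s, 0 ≤ f i) (h1 : ∀ i ∈ s, f i ≤ 1) :
    1 - ∑ i ∈ s, (1 - f i) ≤ ∏ i ∈ s, f i := by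
  induction s using Finset.cons_induction with
  | empty => simp
  | cons j s hj ih =>
    simp only [Finset.mem_cons, forall_eq_or_imp] at h0 h1
    rw [Finset.sum_cons, Finset.prod_cons]
    have := ih h0.2 h1.2
    have : 0 ≤ ∑ i ∈ s, (1 - f i) := Finset.sum_nonneg fun i hi => sub_nonneg.2 (h1.2 i hi)
    nlinarith

lemma HasProd.one_sub_tsum_one_sub_le {ι : Type*} {f : ι → ℝ} {p : ℝ} (hp : HasProd f p)
    (h0 : ∀ i, 0 ≤ f i) (h1 : ∀ i, f i ≤ 1) (hs : Summable fun i => 1 - f i) :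
    1 - ∑' i, (1 - f i) ≤ p :=
  ge_of_tendsto hp <| Eventually.of_forall fun s =>
    (sub_le_sub_left (hs.sum_le_tsum s fun i _ => sub_nonneg.2 (h1 i)) 1).trans
      (s.one_sub_sum_one_sub_le_prod (fun i _ => h0 i) fun i _ => h1 i)

lemma HasProd.le_one_of_nonneg {ι : Type*} {f : ι → ℝ} {p : ℝ} (hp : HasProd f p)
    (h0 : ∀ i, 0 ≤ f i) (h1 : ∀ i, f i ≤ 1) : p ≤ 1 :=
  le_of_tendsto' hp fun _ => Finset.prod_le_one (fun i _ => h0 i) fun i _ => h1 i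

lemma norm_ofReal_mul_expI {r : ℝ} (hr : 0 ≤ r) (θ : ℝ) : ‖(r : ℂ) * expI θ‖ = r := by
  rw [norm_mul, expI, Complex.norm_exp_ofReal_mul_I, mul_one, Complex.norm_real,
    Real.norm_of_nonneg hr]

section BlaschkeSequence

variable {w : ℕ → ℂ} (hw : ∀ n, ‖w n‖ ≤ 1) (hsw : Summable fun n => 1 - ‖w n‖)
  {z : ℂ} (hz : ‖z‖ < 1)
include hw hsw hz

lemma summable_norm_blaschkeFactor_sub_one :
    Summable fun n => ‖blaschkeFactor (w n) z - 1‖ :=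
  (hsw.mul_right (2 / (1 - ‖z‖))).of_nonneg_of_le (fun _ => norm_nonneg _) fun n =>
    (norm_blaschkeFactor_sub_one_le (hw n) hz).trans_eq (by ring)

lemma summable_one_sub_norm_blaschkeFactor :
    Summable fun n => 1 - ‖blaschkeFactor (w n) z‖ :=
  (hsw.mul_right (2 / (1 - ‖z‖))).of_nonneg_of_le
    (fun _ => sub_nonneg.2 (norm_blaschkeFactor_le_one hz)) fun n =>
    (one_sub_norm_blaschkeFactor_le (hw n) hz).trans_eq (by ring)

lemma multipliable_blaschkeFactor : Multipliable fun n => blaschkeFactor (w n) z := by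
  simpa using multipliable_one_add_of_summable (summable_norm_blaschkeFactor_sub_one hw hsw hz)

end BlaschkeSequence

lemma exists_isBlaschkeProductWith {lam : ℂ} {w : ℕ → ℂ} (hlam : ‖lam‖ = 1)
    (hw : ∀ n, ‖w n‖ ≤ 1) (hsw : Summable fun n => 1 - ‖w n‖) :
    ∃ f, IsBlaschkeProductWith f lam w := by
  have hlam0 : lam ≠ 0 := norm_ne_zero_iff.1 (by rw [hlam]; exact one_ne_zero)
  refine ⟨fun z => lam * ∏' n, blaschkeFactor (w n) z, hlam, hw, hsw, fun z hz => ?_⟩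
  rw [inv_mul_cancel_left₀ hlam0]
  exact (multipliable_blaschkeFactor hw hsw (mem_ball_zero_iff.1 hz)).hasProd

lemma blaschkeFactor_mulIndicator (S : Set ℕ) (zs : ℕ → ℂ) (n : ℕ) (z : ℂ) :
    blaschkeFactor (S.mulIndicator zs n) z =
      S.mulIndicator (fun n => blaschkeFactor (zs n) z) n := by
  by_cases hn : n ∈ S <;> simp [hn, blaschkeFactor_one]

lemma one_sub_norm_mulIndicator {ι E : Type*} [Norm E] [One E] [NormOneClass E] (S : Set ι)
    (f : ι → E) (i : ι) : 1 - ‖S.mulIndicator f i‖ = S.indicator (fun i => 1 - ‖f i‖) i := by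
  by_cases hi : i ∈ S <;> simp [hi]

namespace IsBlaschkeProductWith

variable {f : ℂ → ℂ} {lam : ℂ} {w : ℕ → ℂ} (hf : IsBlaschkeProductWith f lam w)
include hf

lemma hasProd_norm {z : ℂ} (hz : ‖z‖ < 1) :
    HasProd (fun n => ‖blaschkeFactor (w n) z‖) ‖f z‖ := by
  simpa [hf.1] using (hf.2.2.2 z (mem_ball_zero_iff.2 hz)).norm

lemma one_sub_tsum_le_norm {z : ℂ} (hz : ‖z‖ < 1) :
    1 - ∑' n, (1 - ‖blaschkeFactor (w n) z‖) ≤ ‖f z‖ :=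
  (hf.hasProd_norm hz).one_sub_tsum_one_sub_le (fun _ => norm_nonneg _)
    (fun _ => norm_blaschkeFactor_le_one hz)
    (summable_one_sub_norm_blaschkeFactor hf.2.1 hf.2.2.1 hz)

lemma norm_le_one {z : ℂ} (hz : ‖z‖ < 1) : ‖f z‖ ≤ 1 :=
  (hf.hasProd_norm hz).le_one_of_nonneg (fun _ => norm_nonneg _)
    fun _ => norm_blaschkeFactor_le_one hz

lemma isFloating {r ε : ℕ → ℝ} (hr : ∀ k, r k ∈ Ioo 0 1) (hr1 : Tendsto r atTop (𝓝 1))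
    (hε : Tendsto ε atTop (𝓝 0))
    (hdef : ∀ k θ, ∑' n, (1 - ‖blaschkeFactor (w n) (r k * expI θ)‖) ≤ ε k) :
    IsFloating f := by
  have hnorm (k : ℕ) (θ : ℝ) : ‖(r k : ℂ) * expI θ‖ < 1 := by
    rw [norm_ofReal_mul_expI (hr k).1.le]; exact (hr k).2
  refine ⟨⟨lam, w, hf⟩, r, hr, hr1, tendsto_of_tendsto_of_tendsto_of_le_of_le
    (g := fun k => 1 - ε k) (by simpa using hε.const_sub 1) tendsto_const_nhds
    (fun k => le_ciInf fun θ => ?_) fun k => ?_⟩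
  · linarith [hdef k θ, hf.one_sub_tsum_le_norm (hnorm k θ)]
  · exact (ciInf_le ⟨0, by rintro _ ⟨θ, rfl⟩; exact norm_nonneg _⟩ 0).trans
      (hf.norm_le_one (hnorm k 0))

lemma exists_mulIndicator (S : Set ℕ) {lam' : ℂ} (hlam' : ‖lam'‖ = 1) :
    ∃ g, IsBlaschkeProductWith g lam' (S.mulIndicator w) := by
  refine exists_isBlaschkeProductWith hlam' (fun n => ?_) ?_
  · by_cases hn : n ∈ S <;> simp [hn, hf.2.1 n]
  · simpa only [one_sub_norm_mulIndicator] using hf.2.2.1.indicator S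

lemma eq_mul_of_mulIndicator {S : Set ℕ} {f₁ f₂ : ℂ → ℂ}
    (hf₁ : IsBlaschkeProductWith f₁ lam (S.mulIndicator w))
    (hf₂ : IsBlaschkeProductWith f₂ 1 (Sᶜ.mulIndicator w)) :
    ∀ z ∈ unitDisc, f z = f₁ z * f₂ z := by
  intro z hz
  have hlam0 : lam ≠ 0 := norm_ne_zero_iff.1 (by rw [hf.1]; exact one_ne_zero)
  have hprod := (hf₁.2.2.2 z hz).mul (hf₂.2.2.2 z hz)
  simp only [blaschkeFactor_mulIndicator, ← Pi.mul_apply (S.mulIndicator _),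
    Set.mulIndicator_self_mul_compl, inv_one, one_mul] at hprod
  have := (hf.2.2.2 z hz).unique hprod
  rw [mul_assoc] at this
  exact mul_left_cancel₀ (inv_ne_zero hlam0) this

end IsBlaschkeProductWith

section OffAnnulus

variable {zs : ℕ → ℂ} (hzs : ∀ n, ‖zs n‖ ≤ 1) (hsum : Summable fun n => 1 - ‖zs n‖)
include hsum in
lemma finite_setOf_norm_lt {q : ℝ} (hq : q < 1) : {n | ‖zs n‖ < q}.Finite :=
  (eventually_cofinite.1 <| hsum.tendsto_cofinite_zero.eventually <|
    gt_mem_nhds (sub_pos.2 hq)).subset fun n (hn : ‖zs n‖ < q) => not_lt.2 (by linarith)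

include hzs in
lemma indicator_one_sub_norm_blaschkeFactor_le {q q' : ℝ} {z : ℂ} (hz : ‖z‖ < 1) (n : ℕ) :
    {n | ‖zs n‖ ∉ Ico q q'}.indicator (fun n => 1 - ‖blaschkeFactor (zs n) z‖) n ≤
      (1 - ‖z‖) * {n | ‖zs n‖ < q}.indicator (fun n => 2 / (1 - ‖zs n‖)) n +
        2 / (1 - ‖z‖) * {n | q' ≤ ‖zs n‖}.indicator (fun n => 1 - ‖zs n‖) n := by
  have hz' : 0 < 1 - ‖z‖ := sub_pos.2 hz
  have hlow : 0 ≤ {n | ‖zs n‖ < q}.indicator (fun n => 2 / (1 - ‖zs n‖)) n :=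
    indicator_nonneg (fun n _ => div_nonneg zero_le_two (sub_nonneg.2 (hzs n))) n
  have hhigh : 0 ≤ {n | q' ≤ ‖zs n‖}.indicator (fun n => 1 - ‖zs n‖) n :=
    indicator_nonneg (fun n _ => sub_nonneg.2 (hzs n)) n
  by_cases hn : ‖zs n‖ ∈ Ico q q'
  · rw [indicator_of_notMem (not_not.2 hn)]
    positivity
  rw [indicator_of_mem hn]
  rcases (hzs n).lt_or_eq with hn1 | hn1
  · rcases not_and_or.1 hn with hq | hq'
    · have : 1 - ‖blaschkeFactor (zs n) z‖ ≤ (1 - ‖z‖) * (2 / (1 - ‖zs n‖)) :=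
        (one_sub_norm_blaschkeFactor_le_swap hn1 hz).trans_eq (by ring)
      rw [indicator_of_mem (show n ∈ {n | ‖zs n‖ < q} from not_le.1 hq)]
      linarith [mul_nonneg (div_nonneg zero_le_two hz'.le) hhigh]
    · have : 1 - ‖blaschkeFactor (zs n) z‖ ≤ 2 / (1 - ‖z‖) * (1 - ‖zs n‖) :=
        (one_sub_norm_blaschkeFactor_le hn1.le hz).trans_eq (by ring)
      rw [indicator_of_mem (show n ∈ {n | q' ≤ ‖zs n‖} from not_lt.1 hq')]
      linarith [mul_nonneg hz'.le hlow]
  · simp only [blaschkeFactor, hn1, lt_irrefl, if_false, norm_one, sub_self]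
    positivity

include hzs hsum

lemma tendsto_tsum_indicator_one_sub_norm :
    Tendsto (fun q => ∑' n, {n | q ≤ ‖zs n‖}.indicator (fun n => 1 - ‖zs n‖) n)
      (𝓝[<] 1) (𝓝 0) := by
  have hpt (n : ℕ) : Tendsto (fun q => {n | q ≤ ‖zs n‖}.indicator (fun n => 1 - ‖zs n‖) n)
      (𝓝[<] 1) (𝓝 0) := by
    rcases (hzs n).lt_or_eq with h | h
    · refine tendsto_const_nhds.congr' ?_
      filter_upwards [(eventually_gt_nhds h).filter_mono nhdsWithin_le_nhds] with q hq
      exact (indicator_of_notMem (not_le.2 hq) _).symm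
    · simp [indicator_apply, h]
  simpa using tendsto_tsum_of_dominated_convergence hsum hpt (Eventually.of_forall fun q n =>
    (norm_indicator_le_norm_self _ _).trans (Real.norm_of_nonneg (sub_nonneg.2 (hzs n))).le)

lemma tsum_indicator_one_sub_norm_blaschkeFactor_le {q q' : ℝ} (hq : q < 1) {z : ℂ}
    (hz : ‖z‖ < 1) :
    ∑' n, {n | ‖zs n‖ ∉ Ico q q'}.indicator (fun n => 1 - ‖blaschkeFactor (zs n) z‖) n ≤
      (1 - ‖z‖) * ∑' n, {n | ‖zs n‖ < q}.indicator (fun n => 2 / (1 - ‖zs n‖)) n +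
        2 / (1 - ‖z‖) * ∑' n, {n | q' ≤ ‖zs n‖}.indicator (fun n => 1 - ‖zs n‖) n := by
  have hlow : Summable ({n | ‖zs n‖ < q}.indicator fun n => 2 / (1 - ‖zs n‖)) :=
    summable_of_hasFiniteSupport ((finite_setOf_norm_lt hsum hq).subset support_indicator_subset)
  rw [← tsum_mul_left, ← tsum_mul_left,
    ← ((hlow.mul_left _).tsum_add ((hsum.indicator _).mul_left _))]
  exact Summable.tsum_le_tsum (indicator_one_sub_norm_blaschkeFactor_le hzs hz)
    ((summable_one_sub_norm_blaschkeFactor hzs hsum hz).indicator _)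
    ((hlow.mul_left _).add ((hsum.indicator _).mul_left _))

lemma exists_radius_off_annulus {q ε : ℝ} (hq : q < 1) (hε : 0 < ε) :
    ∃ r q', q < r ∧ r < q' ∧ q' < 1 ∧ 1 - ε ≤ r ∧ ∀ z : ℂ, ‖z‖ = r →
      ∑' n, {n | ‖zs n‖ ∉ Ico q q'}.indicator (fun n => 1 - ‖blaschkeFactor (zs n) z‖) n ≤ ε := by
  set L := ∑' n, {n | ‖zs n‖ < q}.indicator (fun n => 2 / (1 - ‖zs n‖)) n
  have hL : Tendsto (fun r : ℝ => (1 - r) * L) (𝓝[<] 1) (𝓝 0) := by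
    have : Tendsto (fun r : ℝ => (1 - r) * L) (𝓝 1) (𝓝 ((1 - 1) * L)) :=
      ((continuous_const.sub continuous_id).mul continuous_const).tendsto 1
    simpa using this.mono_left nhdsWithin_le_nhds
  obtain ⟨r, ⟨⟨hqr, hεr⟩, hrL⟩, hr1⟩ := (((eventually_gt_nhds hq).and
    (eventually_gt_nhds (sub_lt_self 1 hε))).filter_mono nhdsWithin_le_nhds |>.and
    (hL.eventually_le_const (half_pos hε)) |>.and self_mem_nhdsWithin).exists
  have hT : Tendsto (fun q' => 2 / (1 - r) *
      ∑' n, {n | q' ≤ ‖zs n‖}.indicator (fun n => 1 - ‖zs n‖) n) (𝓝[<] 1) (𝓝 0) := by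
    simpa using (tendsto_tsum_indicator_one_sub_norm hzs hsum).const_mul (2 / (1 - r))
  obtain ⟨q', ⟨hrq', hq'T⟩, hq'1⟩ :=
    (((eventually_gt_nhds hr1).filter_mono nhdsWithin_le_nhds).and
      (hT.eventually_le_const (half_pos hε)) |>.and self_mem_nhdsWithin).exists
  refine ⟨r, q', hqr, hrq', hq'1, hεr.le, fun z hz => ?_⟩
  calc _ ≤ _ := tsum_indicator_one_sub_norm_blaschkeFactor_le hzs hsum (q' := q') hq
        (hz.trans_lt hr1)
    _ ≤ ε := by rw [hz]; linarith

end OffAnnulus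

lemma exists_radii_off_annuli {zs : ℕ → ℂ} (hzs : ∀ n, ‖zs n‖ ≤ 1)
    (hsum : Summable fun n => 1 - ‖zs n‖) :
    ∃ c ρ : ℕ → ℝ, Monotone c ∧ (∀ k, ρ k ∈ Ioo 0 1) ∧ Tendsto ρ atTop (𝓝 1) ∧
      ∀ k (z : ℂ), ‖z‖ = ρ k → ∑' n, {n | ‖zs n‖ ∉ Ico (c k) (c (k + 1))}.indicator
        (fun n => 1 - ‖blaschkeFactor (zs n) z‖) n ≤ 1 / (k + 1) := by
  choose R Q hQR hRQ hQ1 hR hdef using fun (q : Iio (1 : ℝ)) (k : ℕ) =>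
    exists_radius_off_annulus hzs hsum q.2 (Nat.one_div_pos_of_nat (n := k))
  let c : ℕ → Iio (1 : ℝ) := fun k => Nat.rec ⟨0, mem_Iio.2 one_pos⟩ (fun k q => ⟨Q q k, hQ1 q k⟩) k
  have hc : Monotone fun k => (c k).1 :=
    monotone_nat_of_le_succ fun k =>
      show (c k).1 ≤ Q (c k) k from ((hQR (c k) k).trans (hRQ (c k) k)).le
  refine ⟨fun k => (c k).1, fun k => R (c k) k, hc, fun k => ⟨?_, (hRQ _ _).trans (hQ1 _ _)⟩, ?_,
    fun k => hdef (c k) k⟩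
  · exact (hc (Nat.zero_le k)).trans_lt (hQR (c k) k)
  · refine tendsto_of_tendsto_of_tendsto_of_le_of_le (g := fun k : ℕ => 1 - 1 / ((k : ℝ) + 1))
      (by simpa using tendsto_one_div_add_atTop_nhds_zero_nat.const_sub (1 : ℝ)) tendsto_const_nhds
      (fun k => ?_) fun k => ((hRQ _ _).trans (hQ1 _ _)).le
    linarith [hR (c k) k]

lemma isFloating_of_subset {zs : ℕ → ℂ} (hzs : ∀ n, ‖zs n‖ ≤ 1)
    (hsum : Summable fun n => 1 - ‖zs n‖) {A : ℕ → Set ℕ} {ρ : ℕ → ℝ}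
    (hρ : ∀ k, ρ k ∈ Ioo 0 1) (hρ1 : Tendsto ρ atTop (𝓝 1))
    (hdef : ∀ k (z : ℂ), ‖z‖ = ρ k →
      ∑' n, (A k).indicator (fun n => 1 - ‖blaschkeFactor (zs n) z‖) n ≤ 1 / (k + 1))
    {e : ℕ → ℕ} (he : StrictMono e) {T : Set ℕ} (hT : ∀ j, T ⊆ A (e j))
    {f : ℂ → ℂ} {lam : ℂ} (hf : IsBlaschkeProductWith f lam (T.mulIndicator zs)) :
    IsFloating f := by
  refine hf.isFloating (fun j => hρ (e j)) (hρ1.comp he.tendsto_atTop)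
    (tendsto_one_div_add_atTop_nhds_zero_nat.comp he.tendsto_atTop) fun j θ => ?_
  have hz := norm_ofReal_mul_expI (hρ (e j)).1.le θ
  have hsd := summable_one_sub_norm_blaschkeFactor hzs hsum (hz.trans_lt (hρ (e j)).2)
  simp only [blaschkeFactor_mulIndicator, one_sub_norm_mulIndicator]
  exact (Summable.tsum_le_tsum
    (indicator_le_indicator_of_subset (hT j) fun n => sub_nonneg.2 (norm_blaschkeFactor_le_one
      (hz.trans_lt (hρ (e j)).2)))
    (hsd.indicator _) (hsd.indicator _)).trans (hdef _ _ hz)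

/-- Lemma: every Blaschke product factors as a product of two floating
Blaschke products. -/
theorem statement_8 (b : ℂ → ℂ) (hb : IsBlaschkeProduct b) :
    ∃ b1 b2 : ℂ → ℂ, IsFloating b1 ∧ IsFloating b2 ∧
      ∀ z ∈ unitDisc, b z = b1 z * b2 z := by
  obtain ⟨lam, zs, hbzs⟩ := hb
  have hzs := hbzs.2.1
  have hsum := hbzs.2.2.1
  obtain ⟨c, ρ, hc, hρ, hρ1, hdef⟩ := exists_radii_off_annuli hzs hsum
  set S : Set ℕ := {n | ∃ j, ‖zs n‖ ∈ Ico (c (2 * j)) (c (2 * j + 1))}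
  obtain ⟨b1, hb1⟩ := hbzs.exists_mulIndicator S hbzs.1
  obtain ⟨b2, hb2⟩ := hbzs.exists_mulIndicator Sᶜ norm_one
  refine ⟨b1, b2, ?_, ?_, hbzs.eq_mul_of_mulIndicator hb1 hb2⟩
  · refine isFloating_of_subset hzs hsum hρ hρ1 hdef (e := fun j => 2 * j + 1)
      (fun i j (h : i < j) => show 2 * i + 1 < 2 * j + 1 by omega) ?_ hb1
    rintro j n ⟨i, hi⟩ hn
    exact Set.disjoint_left.1 (hc.pairwise_disjoint_on_Ico_succ (show 2 * i ≠ 2 * j + 1 by omega))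
      hi hn
  · exact isFloating_of_subset hzs hsum hρ hρ1 hdef (e := fun j => 2 * j)
      (fun i j (h : i < j) => show 2 * i < 2 * j by omega) (fun j n hn => not_exists.1 hn j) hb2

end
end
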